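/- arXiv:1707.09834 — 3 statements merged into one kernel-verified Lean document; each statement's English description precedes it below -/
import Mathlib

section
/- Let (X,d) be a metric space, T : X → X a mapping, and α ∈ (0, 1/2]. If x_{n+1} = T x_n is the Picard orbit of some point, then for every y ∈ X and every n, at least one of the inequalities α·d(x_n, T x_n) ≤ d(x_n, y) or α·d(x_{n+1}, T x_{n+1}) ≤ d(x_{n+1}, y) holds, provided d(x_{n+1}, x_{n+2}) ≤ d(x_n, x_{n+1}). -/
theorem picard_orbit_alternative {X : Type*} [MetricSpace X] (T : X → X)
    (α : ℝ) (hα0 : 0 < α) (hα : α ≤ 1 / 2)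
    (x : ℕ → X) (hx : ∀ k, x (k + 1) = T (x k))
    (n : ℕ) (hdec : dist (x (n + 1)) (x (n + 2)) ≤ dist (x n) (x (n + 1)))
    (y : X) :
    α * dist (x n) (T (x n)) ≤ dist (x n) y ∨
    α * dist (x (n + 1)) (T (x (n + 1))) ≤ dist (x (n + 1)) y := by
  by_contra h
  push_neg at h
  obtain ⟨h1, h2⟩ := h
  rw [← hx n] at h1
  rw [← hx (n + 1)] at h2
  have ht := dist_triangle (x n) y (x (n + 1))
  rw [dist_comm y (x (n + 1))] at ht
  nlinarith [dist_nonneg (x := x n) (y := x (n + 1))]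
end

section
/- Under the hypotheses of the Suzuki-type C-class fixed point theorem, the fixed point is unique: if a, b ∈ X satisfy Ta = a, Tb = b, then a = b. -/
open MeasureTheory

/-- A C-class function. -/
def IsCClass (F : ℝ → ℝ → ℝ) : Prop :=
  ContinuousOn (fun p : ℝ × ℝ => F p.1 p.2) (Set.Ici 0 ×ˢ Set.Ici 0) ∧
  (∀ s t, 0 ≤ s → 0 ≤ t → F s t ≤ s) ∧
  (∀ s t, 0 ≤ s → 0 ≤ t → F s t = s → s = 0 ∨ t = 0)

theorem suzuki_integral_cclass_fixed_point_unique
    {X : Type*} [MetricSpace X] (T : X → X)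
    (α : ℝ) (hα0 : 0 < α) (hα : α ≤ 1 / 2)
    (F : ℝ → ℝ → ℝ) (hF : IsCClass F)
    (ψ : ℝ → ℝ)
    (hψ_cont : ContinuousOn ψ (Set.Ici 0))
    (hψ_mono : StrictMonoOn ψ (Set.Ici 0))
    (hψ_nonneg : ∀ t, 0 ≤ t → 0 ≤ ψ t)
    (hψ_zero : ∀ t, 0 ≤ t → (ψ t = 0 ↔ t = 0))
    (φ : ℝ → ℝ)
    (hφ_cont : ContinuousOn φ (Set.Ici 0))
    (hφ_pos : ∀ t, 0 < t → 0 < φ t)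
    (hφ_nonneg : ∀ t, 0 ≤ t → 0 ≤ φ t)
    (f : ℝ → ℝ)
    (hf_pos : ∀ t, 0 ≤ t → 0 < f t)
    (hf_int : ∀ b, 0 ≤ b → IntervalIntegrable f volume 0 b)
    (hf_eps : ∀ ε, 0 < ε → 0 < ∫ t in (0:ℝ)..ε, f t)
    (hT : ∀ x y : X, α * dist x (T x) ≤ dist x y →
      ψ (∫ t in (0:ℝ)..(dist (T x) (T y)), f t) ≤
        F (ψ (∫ t in (0:ℝ)..(dist x y), f t))
          (φ (∫ t in (0:ℝ)..(dist x y), f t)))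
    (a b : X) (ha : T a = a) (hb : T b = b) :
    a = b := by
  by_contra hne
  have hd : 0 < dist a b := dist_pos.2 hne
  set I := ∫ t in (0:ℝ)..(dist a b), f t with hI
  have hIpos : 0 < I := hf_eps _ hd
  have hprem : α * dist a (T a) ≤ dist a b := by
    rw [ha, dist_self, mul_zero]; exact dist_nonneg
  have h := hT a b hprem
  rw [ha, hb] at h
  have hψI : 0 ≤ ψ I := hψ_nonneg I hIpos.le
  have hφI : 0 ≤ φ I := hφ_nonneg I hIpos.le
  have hle : F (ψ I) (φ I) ≤ ψ I := hF.2.1 _ _ hψI hφI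
  have heq : F (ψ I) (φ I) = ψ I := le_antisymm hle h
  rcases hF.2.2 _ _ hψI hφI heq with h0 | h0
  · exact absurd ((hψ_zero I hIpos.le).1 h0) hIpos.ne'
  · exact absurd h0 (hφ_pos I hIpos).ne'
end

section
/- Consider the integral equation x(t) = g(t) + ∫₀^t K(s, x(s)) ds on [0,1], with K : [0,1] × ℝⁿ → ℝⁿ and g : [0,1] → ℝⁿ continuous. Suppose there exist α ∈ (0,1/2], ψ ∈ Ψ, φ ∈ Φ_u, a C-class function F, and f : [0,∞) → (0,∞) integrable with ∫₀^ε f > 0 for all ε > 0, such that for all continuous x, y : [0,1] → ℝⁿ and all t, the inequality α·|x(t) − g(t) − ∫₀^t K(s,x(s))ds| ≤ |x(t) − y(t)| implies ψ(∫₀^{|K(t,x(t)) − K(t,y(t))|} f(λ)dλ) ≤ F(ψ(∫₀^{|x(t)−y(t)|} f(λ)dλ), φ(∫₀^{|x(t)−y(t)|} f(λ)dλ)). Then the integral equation has a unique continuous solution on [0,1]. -/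
open MeasureTheory

/-!
Since `ψ` and `a ↦ ∫₀ᵃ f` are strictly increasing and `F s t ≤ s`, the comparison hypothesis
makes `K t` nonexpansive, `‖K t (x t) - K t (y t)‖ ≤ ‖x t - y t‖`, whenever
`α ‖x t - (T x) t‖ ≤ ‖x t - y t‖`. As `α < 1` this covers the pairs `(x, T x)`, and when `x`
is a fixed point it covers every `y`. For a Volterra operator this is enough: the Picard
differences `uₙ t = ‖xₙ t - xₙ₊₁ t‖` satisfy `uₙ₊₁ t ≤ ∫₀ᵗ uₙ`, hence `uₙ t ≤ M tⁿ / n!`, so the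
iterates converge uniformly to a solution; the same estimate for the difference of two solutions
gives uniqueness.
-/

open Set Filter Topology

section Gronwall

variable {b : ℝ}

theorem ContinuousOn.intervalIntegrable_of_mem_Icc {E : Type*} [NormedAddCommGroup E]
    {u : ℝ → E} (hu : ContinuousOn u (Icc 0 b)) {t : ℝ} (ht : t ∈ Icc 0 b) :
    IntervalIntegrable u volume 0 t :=
  (hu.mono (Icc_subset_Icc_right ht.2)).intervalIntegrable_of_Icc ht.1

theorem le_mul_pow_div_factorial_of_le_integral {u : ℕ → ℝ → ℝ} {M : ℝ}
    (hu : ∀ n, ContinuousOn (u n) (Icc 0 b)) (h₀ : ∀ t ∈ Icc 0 b, u 0 t ≤ M)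
    (hsucc : ∀ n, ∀ t ∈ Icc 0 b, u (n + 1) t ≤ ∫ s in 0..t, u n s) :
    ∀ n, ∀ t ∈ Icc 0 b, u n t ≤ M * t ^ n / n.factorial := by
  intro n
  induction n with
  | zero => simpa using h₀
  | succ n ih =>
    intro t ht
    calc u (n + 1) t ≤ ∫ s in 0..t, u n s := hsucc n t ht
      _ ≤ ∫ s in 0..t, M / n.factorial * s ^ n := by
          refine intervalIntegral.integral_mono_on ht.1 ((hu n).intervalIntegrable_of_mem_Icc ht)
            ((continuous_const.mul (continuous_pow n)).intervalIntegrable _ _) fun s hs => ?_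
          exact (ih s ⟨hs.1, hs.2.trans ht.2⟩).trans_eq (by ring)
      _ = M * t ^ (n + 1) / (n + 1).factorial := by
          rw [intervalIntegral.integral_const_mul, integral_pow, Nat.factorial_succ]
          have := n.factorial_pos
          field_simp
          push_cast
          ring

theorem nonpos_of_le_integral {u : ℝ → ℝ} (hu : ContinuousOn u (Icc 0 b))
    (h : ∀ t ∈ Icc 0 b, u t ≤ ∫ s in 0..t, u s) : ∀ t ∈ Icc 0 b, u t ≤ 0 := by
  obtain ⟨M, hM⟩ := isCompact_Icc.exists_bound_of_continuousOn hu
  have hbound := le_mul_pow_div_factorial_of_le_integral (fun _ => hu)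
    (fun t ht => (le_abs_self _).trans (hM t ht)) fun _ => h
  intro t ht
  have hlim : Tendsto (fun n : ℕ => M * t ^ n / n.factorial) atTop (𝓝 0) := by
    simpa [mul_div_assoc] using (FloorSemiring.tendsto_pow_div_factorial_atTop t).const_mul M
  exact le_of_tendsto_of_tendsto' tendsto_const_nhds hlim fun n => hbound n t ht

end Gronwall

theorem exists_tendstoUniformlyOn_of_dist_le_summable {α E : Type*} [MetricSpace E]
    [CompleteSpace E] [Nonempty E] {X : ℕ → α → E} {d : ℕ → ℝ} (hd : Summable d) {s : Set α}
    (hX : ∀ n, ∀ t ∈ s, dist (X n t) (X (n + 1) t) ≤ d n) :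
    ∃ x, TendstoUniformlyOn X x atTop s := by
  have hlim : ∀ t ∈ s, Tendsto (X · t) atTop (𝓝 (limUnder atTop (X · t))) := fun t ht =>
    (cauchySeq_of_dist_le_of_summable d (fun n => hX n t ht) hd).tendsto_limUnder
  refine ⟨fun t => limUnder atTop (X · t), Metric.tendstoUniformlyOn_iff.2 fun ε hε => ?_⟩
  have htail : Tendsto (fun n => ∑' m, d (m + n)) atTop (𝓝 0) := tendsto_sum_nat_add d
  filter_upwards [htail.eventually_lt_const hε] with n hn t ht
  rw [dist_comm]
  refine (dist_le_tsum_of_dist_le_of_tendsto d (fun k => hX k t ht) hd (hlim t ht) n).trans_lt ?_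
  simpa only [add_comm] using hn

theorem ContinuousOn.kernel_comp {E F : Type*} [TopologicalSpace E] [TopologicalSpace F]
    {K : ℝ → E → F} {x : ℝ → E} {s : Set ℝ}
    (hK : ContinuousOn (fun p : ℝ × E => K p.1 p.2) (s ×ˢ univ)) (hx : ContinuousOn x s) :
    ContinuousOn (fun t => K t (x t)) s :=
  hK.comp (continuousOn_id.prodMk hx) fun _ ht => ⟨ht, mem_univ _⟩

theorem TendstoUniformlyOn.kernel_comp {E F : Type*} [NormedAddCommGroup E]
    [ProperSpace E] [PseudoMetricSpace F] {K : ℝ → E → F} {X : ℕ → ℝ → E} {x : ℝ → E}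
    {s : Set ℝ} (hs : IsCompact s) (hK : ContinuousOn (fun p : ℝ × E => K p.1 p.2) (s ×ˢ univ))
    (hx : ContinuousOn x s) (hX : TendstoUniformlyOn X x atTop s) :
    TendstoUniformlyOn (fun n t => K t (X n t)) (fun t => K t (x t)) atTop s := by
  obtain ⟨C, hC⟩ := hs.exists_bound_of_continuousOn hx
  set S := s ×ˢ Metric.closedBall (0 : E) (C + 1)
  have hKunif : UniformContinuousOn (fun p : ℝ × E => K p.1 p.2) S :=
    (hs.prod (isCompact_closedBall _ _)).uniformContinuousOn_of_continuous
      (hK.mono (prod_mono le_rfl (subset_univ _)))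
  have hgraph : TendstoUniformlyOn (fun n t => (t, X n t)) (fun t => (t, x t)) atTop s := by
    refine Metric.tendstoUniformlyOn_iff.2 fun ε hε => ?_
    filter_upwards [Metric.tendstoUniformlyOn_iff.1 hX ε hε] with n hn t ht
    simpa [Prod.dist_eq] using hn t ht
  have hXmem : ∀ᶠ n in atTop, ∀ t ∈ s, (t, X n t) ∈ S := by
    filter_upwards [Metric.tendstoUniformlyOn_iff.1 hX 1 one_pos] with n hn t ht
    refine ⟨ht, mem_closedBall_zero_iff.2 ?_⟩
    calc ‖X n t‖ ≤ ‖x t‖ + dist (x t) (X n t) := by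
          rw [dist_eq_norm']; exact norm_le_insert' _ _
      _ ≤ C + 1 := add_le_add (hC t ht) (hn t ht).le
  have hxmem : ∀ t ∈ s, (t, x t) ∈ S := fun t ht =>
    ⟨ht, mem_closedBall_zero_iff.2 ((hC t ht).trans (by linarith))⟩
  exact hKunif.comp_tendstoUniformlyOn_eventually hXmem hxmem hgraph

section Volterra

variable {E : Type*} [NormedAddCommGroup E] [NormedSpace ℝ E]
  {b : ℝ} {g : ℝ → E} {K : ℝ → E → E}

noncomputable def volterraMap (g : ℝ → E) (K : ℝ → E → E) (x : ℝ → E) (t : ℝ) : E :=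
  g t + ∫ s in 0..t, K s (x s)

noncomputable def picardIter (g : ℝ → E) (K : ℝ → E → E) (n : ℕ) : ℝ → E :=
  (volterraMap g K)^[n] g

theorem picardIter_succ (n : ℕ) : picardIter g K (n + 1) = volterraMap g K (picardIter g K n) :=
  Function.iterate_succ_apply' _ _ _

theorem continuousOn_volterraMap {x : ℝ → E} (hg : ContinuousOn g (Icc 0 b))
    (hK : ContinuousOn (fun p : ℝ × E => K p.1 p.2) (Icc 0 b ×ˢ univ))
    (hx : ContinuousOn x (Icc 0 b)) : ContinuousOn (volterraMap g K x) (Icc 0 b) := by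
  rcases le_or_gt 0 b with hb | hb
  · have := intervalIntegral.continuousOn_primitive_interval'
      ((hK.kernel_comp hx).intervalIntegrable_of_Icc (μ := volume) hb) left_mem_uIcc
    rw [uIcc_of_le hb] at this
    exact hg.add this
  · simp [Icc_eq_empty_of_lt hb]

theorem continuousOn_picardIter (hg : ContinuousOn g (Icc 0 b))
    (hK : ContinuousOn (fun p : ℝ × E => K p.1 p.2) (Icc 0 b ×ˢ univ)) (n : ℕ) :
    ContinuousOn (picardIter g K n) (Icc 0 b) := by
  induction n with
  | zero => exact hg
  | succ n ih => rw [picardIter_succ]; exact continuousOn_volterraMap hg hK ih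

theorem norm_volterraMap_sub_le {x y : ℝ → E}
    (hK : ContinuousOn (fun p : ℝ × E => K p.1 p.2) (Icc 0 b ×ˢ univ))
    (hx : ContinuousOn x (Icc 0 b)) (hy : ContinuousOn y (Icc 0 b))
    (hxy : ∀ s ∈ Icc 0 b, ‖K s (x s) - K s (y s)‖ ≤ ‖x s - y s‖) {t : ℝ} (ht : t ∈ Icc 0 b) :
    ‖volterraMap g K x t - volterraMap g K y t‖ ≤ ∫ s in 0..t, ‖x s - y s‖ := by
  have hKx := hK.kernel_comp hx
  have hKy := hK.kernel_comp hy
  calc ‖volterraMap g K x t - volterraMap g K y t‖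
        = ‖∫ s in 0..t, (K s (x s) - K s (y s))‖ := by
          rw [volterraMap, volterraMap, add_sub_add_left_eq_sub, intervalIntegral.integral_sub
            (hKx.intervalIntegrable_of_mem_Icc ht) (hKy.intervalIntegrable_of_mem_Icc ht)]
    _ ≤ ∫ s in 0..t, ‖K s (x s) - K s (y s)‖ :=
          intervalIntegral.norm_integral_le_integral_norm ht.1
    _ ≤ ∫ s in 0..t, ‖x s - y s‖ :=
          intervalIntegral.integral_mono_on ht.1
            ((hKx.sub hKy).norm.intervalIntegrable_of_mem_Icc ht)
            ((hx.sub hy).norm.intervalIntegrable_of_mem_Icc ht)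
            fun s hs => hxy s ⟨hs.1, hs.2.trans ht.2⟩

theorem tendsto_volterraMap [ProperSpace E] {X : ℕ → ℝ → E} {x : ℝ → E}
    (hK : ContinuousOn (fun p : ℝ × E => K p.1 p.2) (Icc 0 b ×ˢ univ))
    (hXc : ∀ n, ContinuousOn (X n) (Icc 0 b)) (hx : ContinuousOn x (Icc 0 b))
    (hX : TendstoUniformlyOn X x atTop (Icc 0 b)) {t : ℝ} (ht : t ∈ Icc 0 b) :
    Tendsto (fun n => volterraMap g K (X n) t) atTop (𝓝 (volterraMap g K x t)) := by
  have hsub : uIcc 0 t ⊆ Icc 0 b := by rw [uIcc_of_le ht.1]; exact Icc_subset_Icc_right ht.2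
  refine tendsto_const_nhds.add ?_
  refine TendstoUniformlyOn.tendsto_intervalIntegral_of_continuousOn
    (.of_forall fun n => ((hK.kernel_comp (hXc n)).mono hsub)) ?_
  exact (hX.kernel_comp isCompact_Icc hK hx).mono hsub

theorem exists_norm_picardIter_sub_succ_le (hg : ContinuousOn g (Icc 0 b))
    (hK : ContinuousOn (fun p : ℝ × E => K p.1 p.2) (Icc 0 b ×ˢ univ))
    (hstep : ∀ x, ContinuousOn x (Icc 0 b) → ∀ t ∈ Icc 0 b,
      ‖K t (x t) - K t (volterraMap g K x t)‖ ≤ ‖x t - volterraMap g K x t‖) :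
    ∃ M, ∀ n, ∀ t ∈ Icc 0 b,
      ‖picardIter g K n t - picardIter g K (n + 1) t‖ ≤ M * b ^ n / n.factorial := by
  have hXc := continuousOn_picardIter hg hK
  obtain ⟨M, hM⟩ := isCompact_Icc.exists_bound_of_continuousOn ((hXc 0).sub (hXc 1)).norm
  have hsucc : ∀ n, ∀ t ∈ Icc 0 b,
      ‖picardIter g K (n + 1) t - picardIter g K (n + 1 + 1) t‖ ≤
        ∫ s in 0..t, ‖picardIter g K n s - picardIter g K (n + 1) s‖ := by
    intro n t ht
    have hxy : ∀ s ∈ Icc 0 b, ‖K s (picardIter g K n s) - K s (picardIter g K (n + 1) s)‖ ≤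
        ‖picardIter g K n s - picardIter g K (n + 1) s‖ := fun s hs => by
      rw [picardIter_succ]; exact hstep _ (hXc n) s hs
    simpa only [← picardIter_succ] using
      norm_volterraMap_sub_le (g := g) hK (hXc n) (hXc (n + 1)) hxy ht
  have hbound := le_mul_pow_div_factorial_of_le_integral
    (u := fun n t => ‖picardIter g K n t - picardIter g K (n + 1) t‖)
    (fun n => ((hXc n).sub (hXc (n + 1))).norm) (fun t ht => (le_abs_self _).trans (hM t ht))
    hsucc
  refine ⟨M, fun n t ht => (hbound n t ht).trans ?_⟩
  have hM₀ : 0 ≤ M := (abs_nonneg _).trans (hM t ht)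
  gcongr
  exacts [ht.1, ht.2]

theorem exists_fixedPoint_volterraMap [ProperSpace E] (hg : ContinuousOn g (Icc 0 b))
    (hK : ContinuousOn (fun p : ℝ × E => K p.1 p.2) (Icc 0 b ×ˢ univ))
    (hstep : ∀ x, ContinuousOn x (Icc 0 b) → ∀ t ∈ Icc 0 b,
      ‖K t (x t) - K t (volterraMap g K x t)‖ ≤ ‖x t - volterraMap g K x t‖) :
    ∃ x, ContinuousOn x (Icc 0 b) ∧ ∀ t ∈ Icc 0 b, x t = volterraMap g K x t := by
  have hXc := continuousOn_picardIter hg hK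
  obtain ⟨M, hM⟩ := exists_norm_picardIter_sub_succ_le hg hK hstep
  obtain ⟨x, hX⟩ := exists_tendstoUniformlyOn_of_dist_le_summable
    (by simpa only [mul_div_assoc] using (Real.summable_pow_div_factorial b).mul_left M)
    fun n t ht => (dist_eq_norm _ _).trans_le (hM n t ht)
  have hx : ContinuousOn x (Icc 0 b) := hX.continuousOn (.of_forall hXc)
  refine ⟨x, hx, fun t ht => tendsto_nhds_unique
    ((hX.tendsto_at ht).comp (tendsto_add_atTop_nat 1)) ?_⟩
  simpa only [Function.comp_def, picardIter_succ] using tendsto_volterraMap hK hXc hx hX ht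

theorem eqOn_of_volterraMap_fixed {x y : ℝ → E}
    (hK : ContinuousOn (fun p : ℝ × E => K p.1 p.2) (Icc 0 b ×ˢ univ))
    (hx : ContinuousOn x (Icc 0 b)) (hy : ContinuousOn y (Icc 0 b))
    (hxfix : ∀ t ∈ Icc 0 b, x t = volterraMap g K x t)
    (hyfix : ∀ t ∈ Icc 0 b, y t = volterraMap g K y t)
    (hxy : ∀ t ∈ Icc 0 b, ‖K t (x t) - K t (y t)‖ ≤ ‖x t - y t‖) : EqOn x y (Icc 0 b) := by
  have h := nonpos_of_le_integral (u := fun t => ‖x t - y t‖) (hx.sub hy).norm fun t ht => by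
    rw [hxfix t ht, hyfix t ht]
    exact norm_volterraMap_sub_le hK hx hy hxy ht
  exact fun t ht => sub_eq_zero.1 (norm_le_zero_iff.1 (h t ht))

end Volterra

theorem strictMonoOn_integral_of_pos {f : ℝ → ℝ} (hf_pos : ∀ t, 0 ≤ t → 0 < f t)
    (hf_int : ∀ b, 0 ≤ b → IntervalIntegrable f volume 0 b) :
    StrictMonoOn (fun a => ∫ s in 0..a, f s) (Ici 0) := by
  intro a ha c hc hac
  have hint : IntervalIntegrable f volume a c := (hf_int a ha).symm.trans (hf_int c hc)
  have hpos : 0 < ∫ s in a..c, f s :=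
    intervalIntegral.intervalIntegral_pos_of_pos_on hint
      (fun s hs => hf_pos s (ha.trans hs.1.le)) hac
  have hsum := intervalIntegral.integral_add_adjacent_intervals (hf_int a ha) hint
  dsimp only
  linarith

theorem IsCClass.le_of_le_comparison {F : ℝ → ℝ → ℝ} {ψ φ f : ℝ → ℝ} (hF : IsCClass F)
    (hψ : StrictMonoOn ψ (Ici 0)) (hψ₀ : ∀ t, 0 ≤ t → 0 ≤ ψ t) (hφ₀ : ∀ t, 0 ≤ t → 0 ≤ φ t)
    (hf_pos : ∀ t, 0 ≤ t → 0 < f t) (hf_int : ∀ b, 0 ≤ b → IntervalIntegrable f volume 0 b)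
    {a c : ℝ} (ha : 0 ≤ a) (hc : 0 ≤ c)
    (h : ψ (∫ s in 0..a, f s) ≤ F (ψ (∫ s in 0..c, f s)) (φ (∫ s in 0..c, f s))) : a ≤ c := by
  have hI₀ : ∀ a, 0 ≤ a → 0 ≤ ∫ s in 0..a, f s := fun a ha =>
    intervalIntegral.integral_nonneg ha fun s hs => (hf_pos s hs.1).le
  have hmono : StrictMonoOn (fun a => ψ (∫ s in 0..a, f s)) (Ici 0) :=
    hψ.comp (strictMonoOn_integral_of_pos hf_pos hf_int) fun a ha => hI₀ a ha
  exact (hmono.le_iff_le ha hc).1 (h.trans (hF.2.1 _ _ (hψ₀ _ (hI₀ c hc)) (hφ₀ _ (hI₀ c hc))))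

theorem integral_equation_unique_solution_general
    (N : ℕ)
    (K : ℝ → EuclideanSpace ℝ (Fin N) → EuclideanSpace ℝ (Fin N))
    (g : ℝ → EuclideanSpace ℝ (Fin N))
    (hK : ContinuousOn (fun p : ℝ × EuclideanSpace ℝ (Fin N) => K p.1 p.2)
      (Set.Icc 0 1 ×ˢ Set.univ))
    (hg : ContinuousOn g (Set.Icc 0 1))
    (α : ℝ) (hα : α ≤ 1 / 2)
    (F : ℝ → ℝ → ℝ) (hF : IsCClass F)
    (ψ : ℝ → ℝ)
    (hψ_mono : StrictMonoOn ψ (Set.Ici 0))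
    (hψ_nonneg : ∀ t, 0 ≤ t → 0 ≤ ψ t)
    (φ : ℝ → ℝ)
    (hφ_nonneg : ∀ t, 0 ≤ t → 0 ≤ φ t)
    (f : ℝ → ℝ)
    (hf_pos : ∀ t, 0 ≤ t → 0 < f t)
    (hf_int : ∀ b, 0 ≤ b → IntervalIntegrable f volume 0 b)
    (hyp : ∀ x y : ℝ → EuclideanSpace ℝ (Fin N),
      ContinuousOn x (Set.Icc 0 1) → ContinuousOn y (Set.Icc 0 1) →
      ∀ t ∈ Set.Icc (0:ℝ) 1,
        α * ‖x t - g t - ∫ s in (0:ℝ)..t, K s (x s)‖ ≤ ‖x t - y t‖ →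
        ψ (∫ lam in (0:ℝ)..‖K t (x t) - K t (y t)‖, f lam) ≤
          F (ψ (∫ lam in (0:ℝ)..‖x t - y t‖, f lam))
            (φ (∫ lam in (0:ℝ)..‖x t - y t‖, f lam))) :
    ∃ x : ℝ → EuclideanSpace ℝ (Fin N),
      (ContinuousOn x (Set.Icc 0 1) ∧
        ∀ t ∈ Set.Icc (0:ℝ) 1, x t = g t + ∫ s in (0:ℝ)..t, K s (x s)) ∧
      ∀ y : ℝ → EuclideanSpace ℝ (Fin N),
        ContinuousOn y (Set.Icc 0 1) →
        (∀ t ∈ Set.Icc (0:ℝ) 1, y t = g t + ∫ s in (0:ℝ)..t, K s (y s)) →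
        ∀ t ∈ Set.Icc (0:ℝ) 1, y t = x t := by
  have hnonexp : ∀ x y, ContinuousOn x (Icc 0 1) → ContinuousOn y (Icc 0 1) →
      ∀ t ∈ Icc (0:ℝ) 1, α * ‖x t - volterraMap g K x t‖ ≤ ‖x t - y t‖ →
        ‖K t (x t) - K t (y t)‖ ≤ ‖x t - y t‖ := fun x y hx hy t ht h =>
    hF.le_of_le_comparison hψ_mono hψ_nonneg hφ_nonneg hf_pos hf_int (norm_nonneg _)
      (norm_nonneg _) (hyp x y hx hy t ht (by rwa [sub_sub]))
  obtain ⟨x, hx, hxfix⟩ := exists_fixedPoint_volterraMap hg hK fun x hx t ht =>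
    hnonexp x _ hx (continuousOn_volterraMap hg hK hx) t ht
      (mul_le_of_le_one_left (norm_nonneg _) (by linarith))
  refine ⟨x, ⟨hx, hxfix⟩, fun y hy hyfix t ht => ?_⟩
  refine (eqOn_of_volterraMap_fixed hK hx hy hxfix hyfix (fun s hs => ?_) ht).symm
  refine hnonexp x y hx hy s hs ?_
  rw [← hxfix s hs, sub_self, norm_zero, mul_zero]
  exact norm_nonneg _

theorem integral_equation_unique_solution
    (N : ℕ)
    (K : ℝ → EuclideanSpace ℝ (Fin N) → EuclideanSpace ℝ (Fin N))
    (g : ℝ → EuclideanSpace ℝ (Fin N))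
    (hK : ContinuousOn (fun p : ℝ × EuclideanSpace ℝ (Fin N) => K p.1 p.2)
      (Set.Icc 0 1 ×ˢ Set.univ))
    (hg : ContinuousOn g (Set.Icc 0 1))
    (α : ℝ) (hα0 : 0 < α) (hα : α ≤ 1 / 2)
    (F : ℝ → ℝ → ℝ) (hF : IsCClass F)
    (ψ : ℝ → ℝ)
    (hψ_cont : ContinuousOn ψ (Set.Ici 0))
    (hψ_mono : StrictMonoOn ψ (Set.Ici 0))
    (hψ_nonneg : ∀ t, 0 ≤ t → 0 ≤ ψ t)
    (hψ_zero : ∀ t, 0 ≤ t → (ψ t = 0 ↔ t = 0))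
    (φ : ℝ → ℝ)
    (hφ_cont : ContinuousOn φ (Set.Ici 0))
    (hφ_pos : ∀ t, 0 < t → 0 < φ t)
    (hφ_nonneg : ∀ t, 0 ≤ t → 0 ≤ φ t)
    (f : ℝ → ℝ)
    (hf_pos : ∀ t, 0 ≤ t → 0 < f t)
    (hf_int : ∀ b, 0 ≤ b → IntervalIntegrable f volume 0 b)
    (hf_eps : ∀ ε, 0 < ε → 0 < ∫ t in (0:ℝ)..ε, f t)
    (hyp : ∀ x y : ℝ → EuclideanSpace ℝ (Fin N),
      ContinuousOn x (Set.Icc 0 1) → ContinuousOn y (Set.Icc 0 1) →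
      ∀ t ∈ Set.Icc (0:ℝ) 1,
        α * ‖x t - g t - ∫ s in (0:ℝ)..t, K s (x s)‖ ≤ ‖x t - y t‖ →
        ψ (∫ lam in (0:ℝ)..‖K t (x t) - K t (y t)‖, f lam) ≤
          F (ψ (∫ lam in (0:ℝ)..‖x t - y t‖, f lam))
            (φ (∫ lam in (0:ℝ)..‖x t - y t‖, f lam))) :
    ∃ x : ℝ → EuclideanSpace ℝ (Fin N),
      (ContinuousOn x (Set.Icc 0 1) ∧
        ∀ t ∈ Set.Icc (0:ℝ) 1, x t = g t + ∫ s in (0:ℝ)..t, K s (x s)) ∧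
      ∀ y : ℝ → EuclideanSpace ℝ (Fin N),
        ContinuousOn y (Set.Icc 0 1) →
        (∀ t ∈ Set.Icc (0:ℝ) 1, y t = g t + ∫ s in (0:ℝ)..t, K s (y s)) →
        ∀ t ∈ Set.Icc (0:ℝ) 1, y t = x t :=
  integral_equation_unique_solution_general N K g hK hg α hα F hF ψ hψ_mono hψ_nonneg φ hφ_nonneg f
    hf_pos hf_int hyp
end
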